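/- arXiv:1102.5585 — 2 statements merged into one kernel-verified Lean document; each statement's English description precedes it below -/
import Mathlib

section
/- Let N = (N₀,M0) be a two-level PT-net system with T = L ∪ H having the property BNDC, and let R be the least relation generated from M0 R M0 by the rules: (i) if M1 R M2 and M2[h⟩M2' with h ∈ H then M1 R M2'; (ii) if M1 R M2, M1[l⟩M1' and M2[l⟩M2' with l ∈ L then M1' R M2'. If M1 and M2 are reachable markings of N\H and of N respectively with M1 R M2, then L(N₀\H, M1) = L(N₀\H, M2). -/
/-! ## Labelled transition systems -/

structure LTS (Q : Type _) (A : Type _) where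
  init : Q
  tr : Q → A → Q → Prop

namespace LTS

variable {Q Q' A : Type _}

/-- One unobservable step. -/
def TauStep (S : LTS Q A) (Obs : Set A) (q q' : Q) : Prop :=
  ∃ τ, τ ∉ Obs ∧ S.tr q τ q'

/-- `q →* q'` : reflexive-transitive closure of unobservable steps. -/
def TauStar (S : LTS Q A) (Obs : Set A) : Q → Q → Prop :=
  Relation.ReflTransGen (S.TauStep Obs)

/-- Weak steps producing a word of observable labels. -/
inductive WeakSteps (S : LTS Q A) (Obs : Set A) : Q → List A → Q → Prop
  | nil (q : Q) : WeakSteps S Obs q [] q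
  | tau {q q' q'' : Q} {w : List A} {τ : A} :
      τ ∉ Obs → S.tr q τ q' → WeakSteps S Obs q' w q'' → WeakSteps S Obs q w q''
  | obs {q q' q'' : Q} {w : List A} {σ : A} :
      σ ∈ Obs → S.tr q σ q' → WeakSteps S Obs q' w q'' → WeakSteps S Obs q (σ :: w) q''

/-- The language of a partially observed LTS. -/
def lang (S : LTS Q A) (Obs : Set A) : Set (List A) :=
  { w | ∃ q, S.WeakSteps Obs S.init w q }

end LTS

/-- `R` is a weak simulation of `S` by `S'`. -/
def IsWeakSimulation {Q Q' A : Type _} (Obs : Set A) (S : LTS Q A) (S' : LTS Q' A)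
    (R : Q → Q' → Prop) : Prop :=
  R S.init S'.init ∧
  ∀ q1 q1', R q1 q1' →
    (∀ σ ∈ Obs, ∀ q2, S.tr q1 σ q2 →
      ∃ q1'' q2'' q2', S'.TauStar Obs q1' q1'' ∧ S'.tr q1'' σ q2'' ∧
        S'.TauStar Obs q2'' q2' ∧ R q2 q2') ∧
    (∀ τ ∉ Obs, ∀ q2, S.tr q1 τ q2 →
      ∃ q2', S'.TauStar Obs q1' q2' ∧ R q2 q2')

/-- `S` is weakly simulated by `S'`. -/
def WeaklySimulated {Q Q' A : Type _} (Obs : Set A) (S : LTS Q A) (S' : LTS Q' A) : Prop :=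
  ∃ R, IsWeakSimulation Obs S S' R

/-- `R` is a weak bisimulation between `S` and `S'`. -/
def IsWeakBisimulation {Q Q' A : Type _} (Obs : Set A) (S : LTS Q A) (S' : LTS Q' A)
    (R : Q → Q' → Prop) : Prop :=
  IsWeakSimulation Obs S S' R ∧ IsWeakSimulation Obs S' S (fun q' q => R q q')

/-- `S` and `S'` are weakly bisimilar. -/
def WeaklyBisimilar {Q Q' A : Type _} (Obs : Set A) (S : LTS Q A) (S' : LTS Q' A) : Prop :=
  ∃ R, IsWeakBisimulation Obs S S' R

/-! ## Place/Transition Petri nets -/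

/-- A PT-net over a universe `P` of places and `Tr` of transitions:
a finite set of places, a finite set of transitions, and input/output flows.
Flows of non-transitions vanish. -/
structure PTNet (P : Type _) (Tr : Type _) where
  places : Finset P
  transitions : Finset Tr
  pre : Tr → P → ℕ
  post : Tr → P → ℕ
  pre_eq_zero : ∀ t ∉ transitions, ∀ p, pre t p = 0
  post_eq_zero : ∀ t ∉ transitions, ∀ p, post t p = 0

namespace PTNet

variable {P Tr : Type _} [DecidableEq P] [DecidableEq Tr]

/-- `M[t⟩` : transition `t` is enabled at marking `M`. -/
def Enabled (N : PTNet P Tr) (M : P → ℕ) (t : Tr) : Prop :=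
  t ∈ N.transitions ∧ ∀ p ∈ N.places, N.pre t p ≤ M p

/-- The marking obtained by firing `t` at `M`. -/
def fire (N : PTNet P Tr) (M : P → ℕ) (t : Tr) : P → ℕ :=
  fun p => if p ∈ N.places then M p + N.post t p - N.pre t p else M p

/-- `M[t⟩M'`. -/
def Fires (N : PTNet P Tr) (M : P → ℕ) (t : Tr) (M' : P → ℕ) : Prop :=
  N.Enabled M t ∧ M' = N.fire M t

/-- `M[s⟩M'` for a sequence `s` of transitions. -/
def FiresSeq (N : PTNet P Tr) : (P → ℕ) → List Tr → (P → ℕ) → Prop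
  | M, [], M' => M' = M
  | M, t :: s, M' => ∃ M'', N.Fires M t M'' ∧ N.FiresSeq M'' s M'

/-- `M'` is reachable from `M`. -/
def Reachable (N : PTNet P Tr) (M M' : P → ℕ) : Prop :=
  ∃ s, N.FiresSeq M s M'

/-- The restriction `N \ T'` of a net: the transitions in `T'` are removed. -/
def restrict (N : PTNet P Tr) (T' : Finset Tr) : PTNet P Tr where
  places := N.places
  transitions := N.transitions \ T'
  pre := fun t p => if t ∈ N.transitions \ T' then N.pre t p else 0
  post := fun t p => if t ∈ N.transitions \ T' then N.post t p else 0
  pre_eq_zero := by intro t ht p; simp [ht]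
  post_eq_zero := by intro t ht p; simp [ht]

/-- The composition `N1 | N2` of two nets (intended for disjoint place sets);
shared transitions synchronize. -/
def comp (N1 N2 : PTNet P Tr) : PTNet P Tr where
  places := N1.places ∪ N2.places
  transitions := N1.transitions ∪ N2.transitions
  pre := fun t p => if p ∈ N1.places then N1.pre t p else N2.pre t p
  post := fun t p => if p ∈ N1.places then N1.post t p else N2.post t p
  pre_eq_zero := by
    intro t ht p
    simp only [Finset.mem_union, not_or] at ht
    by_cases hp : p ∈ N1.places <;>
      simp [hp, N1.pre_eq_zero t ht.1, N2.pre_eq_zero t ht.2]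
  post_eq_zero := by
    intro t ht p
    simp only [Finset.mem_union, not_or] at ht
    by_cases hp : p ∈ N1.places <;>
      simp [hp, N1.post_eq_zero t ht.1, N2.post_eq_zero t ht.2]

/-- The union of two initial markings (agrees with `M1` on the places of `N1`,
with `M2` elsewhere). -/
def combine (N1 : PTNet P Tr) (M1 M2 : P → ℕ) : P → ℕ :=
  fun p => if p ∈ N1.places then M1 p else M2 p

/-- The reachability graph of a marked net, as an LTS on markings. -/
def toLTS (N : PTNet P Tr) (M0 : P → ℕ) : LTS (P → ℕ) Tr where
  init := M0
  tr := fun M t M' => N.Fires M t M'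

/-- The language of the net system `(N, M0)` whose observable transitions are
those in `L` (labelled by themselves): projections of firing sequences onto `L*`. -/
def lang (N : PTNet P Tr) (M0 : P → ℕ) (L : Finset Tr) : Set (List Tr) :=
  { w | ∃ s M, N.FiresSeq M0 s M ∧ s.filter (· ∈ L) = w }

/-- The free language of the net system `(N, M0)`: all of its firing sequences. -/
def freeLang (N : PTNet P Tr) (M0 : P → ℕ) : Set (List Tr) :=
  { s | ∃ M, N.FiresSeq M0 s M }

/-- The net with given places and transitions and empty flow. -/
def ofSets (Pl : Finset P) (Ts : Finset Tr) : PTNet P Tr where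
  places := Pl
  transitions := Ts
  pre := fun _ _ => 0
  post := fun _ _ => 0
  pre_eq_zero := fun _ _ _ => rfl
  post_eq_zero := fun _ _ _ => rfl

end PTNet

/-! ## Non-interference properties -/

section Security

variable {P Tr : Type _} [DecidableEq P] [DecidableEq Tr]

/-- Non-Deducibility on Compositions: for every high-level net system `N'`
(with any initial marking `M0'`) whose places are disjoint from those of `N` and
whose transitions avoid `L`, the systems `N \ H` and `(N | N') \ (H \ H')` are
language equivalent, the observable transitions being those in `L`. -/
def NDC (N : PTNet P Tr) (M0 : P → ℕ) (L H : Finset Tr) : Prop :=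
  ∀ (N' : PTNet P Tr) (M0' : P → ℕ),
    Disjoint N.places N'.places → Disjoint N'.transitions L →
    (N.restrict H).lang M0 L =
      ((N.comp N').restrict (H \ N'.transitions)).lang (N.combine M0 M0') L

/-- Bisimulation-based Non-Deducibility on Compositions: as `NDC`, but with
weak bisimilarity in place of language equivalence. -/
def BNDC (N : PTNet P Tr) (M0 : P → ℕ) (L H : Finset Tr) : Prop :=
  ∀ (N' : PTNet P Tr) (M0' : P → ℕ),
    Disjoint N.places N'.places → Disjoint N'.transitions L →
    WeaklyBisimilar (L : Set Tr) ((N.restrict H).toLTS M0)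
      (((N.comp N').restrict (H \ N'.transitions)).toLTS (N.combine M0 M0'))

/-- Strong BNDC: whenever a reachable marking `M1` enables a high transition `h`
with `M1[h⟩M2`, the systems `(N \ H, M1)` and `(N \ H, M2)` are weakly bisimilar. -/
def SBNDC (N : PTNet P Tr) (M0 : P → ℕ) (L H : Finset Tr) : Prop :=
  ∀ M1 h M2, N.Reachable M0 M1 → h ∈ H → N.Fires M1 h M2 →
    WeaklyBisimilar (L : Set Tr) ((N.restrict H).toLTS M1) ((N.restrict H).toLTS M2)

/-- The least relation generated from `M0 R M0` by:
(i) if `M1 R M2` and `M2[h⟩M2'` with `h ∈ H` then `M1 R M2'`;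
(ii) if `M1 R M2`, `M1[l⟩M1'` (in `N \ H`) and `M2[l⟩M2'` with `l ∈ L`
then `M1' R M2'`. -/
inductive RRel (N : PTNet P Tr) (M0 : P → ℕ) (L H : Finset Tr) : (P → ℕ) → (P → ℕ) → Prop
  | base : RRel N M0 L H M0 M0
  | high {M1 M2 M2' : P → ℕ} {h : Tr} : h ∈ H → RRel N M0 L H M1 M2 →
      N.Fires M2 h M2' → RRel N M0 L H M1 M2'
  | low {M1 M2 M1' M2' : P → ℕ} {l : Tr} : l ∈ L → RRel N M0 L H M1 M2 →
      (N.restrict H).Fires M1 l M1' → N.Fires M2 l M2' → RRel N M0 L H M1' M2'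

/-- The property `P(h,l)`: for all `w ∈ (L ∪ H)*` and `s ∈ L*`, if `M0[w⟩M1`,
`M1[h⟩M2`, `M1[s⟩M3` and `M2[s⟩M4`, then `M3[l⟩` iff `M4[l⟩`. -/
def PropP (N : PTNet P Tr) (M0 : P → ℕ) (L H : Finset Tr) (h l : Tr) : Prop :=
  ∀ (w s : List Tr) (M1 M2 M3 M4 : P → ℕ),
    (∀ t ∈ w, t ∈ L ∪ H) → (∀ t ∈ s, t ∈ L) →
    N.FiresSeq M0 w M1 → N.Fires M1 h M2 →
    N.FiresSeq M1 s M3 → N.FiresSeq M2 s M4 →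
    (N.Enabled M3 l ↔ N.Enabled M4 l)

/-- Intransitive Non-Interference for a three-level net system:
`(N \ D, M)` has NDC (w.r.t. low `L`, high `H`) for `M = M0` and for every
marking `M` with `M0[υd⟩M` in `N`, `d ∈ D`. -/
def INI (N : PTNet P Tr) (M0 : P → ℕ) (L D H : Finset Tr) : Prop :=
  NDC (N.restrict D) M0 L H ∧
  ∀ (υ : List Tr) (d : Tr) (M : P → ℕ), d ∈ D → N.FiresSeq M0 (υ ++ [d]) M →
    NDC (N.restrict D) M L H

/-- Bisimulation-based Intransitive Non-Interference: as `INI` with `BNDC`. -/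
def BINI (N : PTNet P Tr) (M0 : P → ℕ) (L D H : Finset Tr) : Prop :=
  BNDC (N.restrict D) M0 L H ∧
  ∀ (υ : List Tr) (d : Tr) (M : P → ℕ), d ∈ D → N.FiresSeq M0 (υ ++ [d]) M →
    BNDC (N.restrict D) M L H

/-- The property `Q(h,l)`: for all `χ ∈ T*` and `s ∈ L*`, if `M0[χ⟩M1`,
`M1[h⟩M2`, `M1[s⟩M3` and `M2[s⟩M4`, then `M3[l⟩` iff `M4[l⟩`. -/
def PropQ (N : PTNet P Tr) (M0 : P → ℕ) (L : Finset Tr) (h l : Tr) : Prop :=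
  ∀ (χ s : List Tr) (M1 M2 M3 M4 : P → ℕ),
    (∀ t ∈ χ, t ∈ N.transitions) → (∀ t ∈ s, t ∈ L) →
    N.FiresSeq M0 χ M1 → N.Fires M1 h M2 →
    N.FiresSeq M1 s M3 → N.FiresSeq M2 s M4 →
    (N.Enabled M3 l ↔ N.Enabled M4 l)

end Security

/-!
A pair `M1 R M2` is witnessed by a run `w` of `N` reaching `M2` whose low projection leads
`N \ H` to `M1`. Compose `N` with the high-level net made of one fresh place, holding as many
tokens as `w` has high transitions, from which every high transition consumes a token. BNDC
yields a weak bisimulation between `N \ H` and this composition. The composition replays `w`,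
and since `N \ H` is deterministic and has no silent moves, the bisimulation relates `M1` with
`M2` plus an empty counter. From there no high transition can fire any more, so the
composition behaves exactly like `(N \ H, M2)`, and the bisimulation transfers firing
sequences of `N \ H` between `M1` and `M2` in both directions.
-/

namespace LTS

variable {Q A : Type*} {Obs : Set A} {S : LTS Q A}

theorem WeakSteps.of_tauStar {q q' r : Q} {w : List A} (hq : S.TauStar Obs q q')
    (h : S.WeakSteps Obs q' w r) : S.WeakSteps Obs q w r := by
  induction hq using Relation.ReflTransGen.head_induction_on with
  | refl => exact h
  | head hstep _ ih =>
    obtain ⟨τ, hτ, htr⟩ := hstep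
    exact .tau hτ htr ih

end LTS

theorem IsWeakSimulation.exists_weakSteps {Q Q' A : Type*} {Obs : Set A} {S : LTS Q A}
    {S' : LTS Q' A} {R : Q → Q' → Prop} (hR : IsWeakSimulation Obs S S' R) {q r : Q}
    {w : List A} (h : S.WeakSteps Obs q w r) {q' : Q'} (hq : R q q') :
    ∃ r', S'.WeakSteps Obs q' w r' ∧ R r r' := by
  induction h generalizing q' with
  | nil => exact ⟨q', .nil q', hq⟩
  | tau hτ htr _ ih =>
    obtain ⟨q1', hq1', hR1⟩ := (hR.2 _ _ hq).2 _ hτ _ htr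
    obtain ⟨r', hr', hrr⟩ := ih hR1
    exact ⟨r', hr'.of_tauStar hq1', hrr⟩
  | obs hσ htr _ ih =>
    obtain ⟨a, b, c, hqa, hab, hbc, hR1⟩ := (hR.2 _ _ hq).1 _ hσ _ htr
    obtain ⟨r', hr', hrr⟩ := ih hR1
    exact ⟨r', .of_tauStar hqa (.obs hσ hab (hr'.of_tauStar hbc)), hrr⟩

namespace PTNet

variable {P Tr : Type*}

theorem restrict_empty [DecidableEq Tr] (N : PTNet P Tr) : N.restrict ∅ = N := by
  cases N
  simp only [restrict, Finset.sdiff_empty, mk.injEq, true_and]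
  constructor <;> funext t q <;> split_ifs <;> simp_all

variable [DecidableEq P] {N : PTNet P Tr}

theorem Fires.firesSeq {M M' : P → ℕ} {t : Tr} (h : N.Fires M t M') : N.FiresSeq M [t] M' :=
  ⟨M', h, rfl⟩

theorem FiresSeq.append {s' : List Tr} :
    ∀ {s : List Tr} {M M' M'' : P → ℕ},
      N.FiresSeq M s M' → N.FiresSeq M' s' M'' → N.FiresSeq M (s ++ s') M''
  | [], _, _, _, rfl, h => h
  | _ :: _, _, _, _, ⟨_, ht, hs⟩, h => ⟨_, ht, hs.append h⟩

theorem FiresSeq.unique :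
    ∀ {s : List Tr} {M M' M'' : P → ℕ}, N.FiresSeq M s M' → N.FiresSeq M s M'' → M' = M''
  | [], _, _, _, h, h' => h.trans h'.symm
  | _ :: _, _, _, _, ⟨_, ha, hs⟩, ⟨_, hb, hs'⟩ => by
    obtain rfl := ha.2.trans hb.2.symm
    exact hs.unique hs'

theorem FiresSeq.mem_transitions :
    ∀ {s : List Tr} {M M' : P → ℕ}, N.FiresSeq M s M' → ∀ t ∈ s, t ∈ N.transitions
  | [], _, _, _ => by simp
  | _ :: _, _, _, ⟨_, ht, hs⟩ => by
    simpa only [List.forall_mem_cons] using ⟨ht.1.1, hs.mem_transitions⟩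

variable [DecidableEq Tr]

theorem restrict_fires_iff {T' : Finset Tr} {M M' : P → ℕ} {t : Tr} :
    (N.restrict T').Fires M t M' ↔ t ∉ T' ∧ N.Fires M t M' := by
  by_cases ht : t ∈ N.transitions \ T'
  · have hmem : t ∈ (N.restrict T').transitions := ht
    have hpre : ∀ q, (N.restrict T').pre t q = N.pre t q := fun _ => if_pos ht
    have hpost : ∀ q, (N.restrict T').post t q = N.post t q := fun _ => if_pos ht
    have hfire : (N.restrict T').fire M t = N.fire M t := by
      funext q
      simp only [fire, hpre, hpost]
      rfl
    rw [Finset.mem_sdiff] at ht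
    simp only [Fires, Enabled, hfire, hpre, hmem, ht, true_and, not_false_eq_true]
    rfl
  · simp only [Finset.mem_sdiff, not_and_or, not_not] at ht
    rcases ht with ht | ht <;> simp [Fires, Enabled, restrict, ht]

theorem FiresSeq.of_restrict {T' : Finset Tr} :
    ∀ {s : List Tr} {M M' : P → ℕ}, (N.restrict T').FiresSeq M s M' → N.FiresSeq M s M'
  | [], _, _, h => h
  | _ :: _, _, _, ⟨_, ht, hs⟩ => ⟨_, (restrict_fires_iff.1 ht).2, hs.of_restrict⟩

section Languages

variable {L : Finset Tr} {M0 : P → ℕ}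

theorem weakSteps_toLTS_of_firesSeq :
    ∀ {s : List Tr} {M M' : P → ℕ},
      N.FiresSeq M s M' → (N.toLTS M0).WeakSteps ↑L M (s.filter (· ∈ L)) M'
  | [], _, _, rfl => .nil _
  | t :: _, _, _, ⟨_, ht, hs⟩ => by
    by_cases htL : t ∈ L
    · rw [List.filter_cons_of_pos (by simpa using htL)]
      exact .obs htL ht (weakSteps_toLTS_of_firesSeq hs)
    · rw [List.filter_cons_of_neg (by simpa using htL)]
      exact .tau htL ht (weakSteps_toLTS_of_firesSeq hs)

theorem weakSteps_toLTS_iff_firesSeq (hN : N.transitions ⊆ L) {s : List Tr} {M M' : P → ℕ} :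
    (N.toLTS M0).WeakSteps ↑L M s M' ↔ N.FiresSeq M s M' := by
  constructor
  · intro h
    induction h with
    | nil => rfl
    | tau hτ htr _ _ => exact absurd (hN htr.1.1) hτ
    | obs _ htr _ ih => exact ⟨_, htr, ih⟩
  · intro h
    have hs : s.filter (· ∈ L) = s :=
      List.filter_eq_self.2 fun t ht => by simpa using hN (h.mem_transitions t ht)
    simpa only [hs] using weakSteps_toLTS_of_firesSeq (M0 := M0) (L := L) h

end Languages

theorem RRel.exists_firesSeq {M0 M1 M2 : P → ℕ} {L H : Finset Tr} (hLH : Disjoint L H)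
    (hR : RRel N M0 L H M1 M2) :
    ∃ w, N.FiresSeq M0 w M2 ∧ (N.restrict H).FiresSeq M0 (w.filter (· ∈ L)) M1 := by
  induction hR with
  | base => exact ⟨[], rfl, rfl⟩
  | high hh _ hf ih =>
    obtain ⟨w, hw, hs⟩ := ih
    refine ⟨w ++ [_], hw.append hf.firesSeq, ?_⟩
    simpa [Finset.disjoint_right.mp hLH hh] using hs
  | low hl _ hf1 hf2 ih =>
    obtain ⟨w, hw, hs⟩ := ih
    refine ⟨w ++ [_], hw.append hf2.firesSeq, ?_⟩
    simpa [hl] using hs.append hf1.firesSeq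

def counter (H : Finset Tr) (p : P) : PTNet P Tr where
  places := {p}
  transitions := H
  pre t _ := if t ∈ H then 1 else 0
  post _ _ := 0
  pre_eq_zero _ ht _ := if_neg ht
  post_eq_zero _ _ _ := rfl

/-- `Y` is a marking of `N | counter H p` in which `N` is marked as `M` and the counter holds
`m` tokens. -/
def IsCounterMarking (N : PTNet P Tr) (p : P) (Y M : P → ℕ) (m : ℕ) : Prop :=
  (∀ q ∈ N.places, Y q = M q) ∧ Y p = m

section Counter

variable {H : Finset Tr} {p : P} {Y M : P → ℕ} {m : ℕ} {t : Tr}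

theorem comp_counter_pre_of_mem {q : P} (hq : q ∈ N.places) :
    (N.comp (counter H p)).pre t q = N.pre t q :=
  if_pos hq

theorem comp_counter_post_of_mem {q : P} (hq : q ∈ N.places) :
    (N.comp (counter H p)).post t q = N.post t q :=
  if_pos hq

theorem comp_counter_pre_self (hp : p ∉ N.places) :
    (N.comp (counter H p)).pre t p = if t ∈ H then 1 else 0 :=
  if_neg hp

theorem comp_counter_post_self (hp : p ∉ N.places) : (N.comp (counter H p)).post t p = 0 :=
  if_neg hp

theorem IsCounterMarking.fire (hp : p ∉ N.places) (hY : N.IsCounterMarking p Y M m)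
    (H : Finset Tr) (t : Tr) :
    N.IsCounterMarking p ((N.comp (counter H p)).fire Y t) (N.fire M t)
      (m - if t ∈ H then 1 else 0) := by
  constructor
  · intro q hq
    have hq' : q ∈ (N.comp (counter H p)).places := Finset.mem_union_left _ hq
    simp only [PTNet.fire, hq, hq', if_true, comp_counter_pre_of_mem hq,
      comp_counter_post_of_mem hq, hY.1 q hq]
  · have hp' : p ∈ (N.comp (counter H p)).places :=
      Finset.mem_union_right _ (Finset.mem_singleton_self p)
    simp only [PTNet.fire, hp', if_true, comp_counter_pre_self hp, comp_counter_post_self hp,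
      hY.2, add_zero]

theorem comp_counter_enabled_iff (hp : p ∉ N.places) (hH : H ⊆ N.transitions)
    (hY : N.IsCounterMarking p Y M m) :
    (N.comp (counter H p)).Enabled Y t ↔ N.Enabled M t ∧ (t ∈ H → 1 ≤ m) := by
  have hpre : ∀ q ∈ N.places, (N.comp (counter H p)).pre t q ≤ Y q ↔ N.pre t q ≤ M q :=
    fun q hq => by rw [comp_counter_pre_of_mem hq, hY.1 q hq]
  have hcount : (N.comp (counter H p)).pre t p ≤ Y p ↔ (t ∈ H → 1 ≤ m) := by
    rw [comp_counter_pre_self hp, hY.2]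
    split_ifs with ht <;> simp [ht]
  have htr : (N.comp (counter H p)).transitions = N.transitions := Finset.union_eq_left.2 hH
  have hpl : (N.comp (counter H p)).places = N.places ∪ {p} := rfl
  rw [Enabled, Enabled, htr, hpl, Finset.forall_mem_union, forall₂_congr hpre, ← hcount]
  simp only [Finset.mem_singleton, forall_eq, and_assoc]

theorem exists_comp_counter_firesSeq (hp : p ∉ N.places) (hH : H ⊆ N.transitions) (c : ℕ) :
    ∀ {w : List Tr} {M M' Y : P → ℕ}, N.FiresSeq M w M' →
      N.IsCounterMarking p Y M (w.countP (· ∈ H) + c) →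
      ∃ Y', (N.comp (counter H p)).FiresSeq Y w Y' ∧ N.IsCounterMarking p Y' M' c
  | [], _, _, _, rfl, hY => ⟨_, rfl, by simpa using hY⟩
  | t :: w, _, _, _, ⟨_, hf, hw⟩, hY => by
    have hcount : (t :: w).countP (· ∈ H) + c =
        (w.countP (· ∈ H) + c) + if t ∈ H then 1 else 0 := by
      simp only [List.countP_cons, decide_eq_true_eq]
      omega
    rw [hcount] at hY
    have hen := (comp_counter_enabled_iff hp hH hY).2 ⟨hf.1, fun ht => by simp [ht]⟩
    have hY1 := hY.fire hp H t
    rw [Nat.add_sub_cancel, ← hf.2] at hY1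
    obtain ⟨Y', hw', hY'⟩ := exists_comp_counter_firesSeq hp hH c hw hY1
    exact ⟨Y', ⟨_, ⟨hen, rfl⟩, hw'⟩, hY'⟩

theorem exists_restrict_firesSeq_of_weakSteps (hp : p ∉ N.places) (hH : H ⊆ N.transitions)
    {L : Finset Tr} (hL : N.transitions \ H ⊆ L) {Y0 Y' : P → ℕ} {v : List Tr}
    (h : ((N.comp (counter H p)).toLTS Y0).WeakSteps ↑L Y v Y')
    (hY : N.IsCounterMarking p Y M 0) : ∃ M', (N.restrict H).FiresSeq M v M' := by
  induction h generalizing M with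
  | nil => exact ⟨M, rfl⟩
  | @tau _ _ _ _ t hτ htr _ _ =>
    obtain ⟨hen, hcount⟩ := (comp_counter_enabled_iff hp hH hY).1 htr.1
    exact absurd (hL (Finset.mem_sdiff.2 ⟨hen.1, fun ht => by simpa using hcount ht⟩)) hτ
  | @obs _ _ _ _ t _ htr _ ih =>
    obtain ⟨hen, hcount⟩ := (comp_counter_enabled_iff hp hH hY).1 htr.1
    have htH : t ∉ H := fun ht => by simpa using hcount ht
    have hY' := hY.fire hp H t
    rw [← htr.2, if_neg htH] at hY'
    obtain ⟨M', hM'⟩ := ih hY'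
    exact ⟨M', _, restrict_fires_iff.2 ⟨htH, hen, rfl⟩, hM'⟩

theorem restrict_freeLang_eq_of_isWeakBisimulation (hp : p ∉ N.places) (hH : H ⊆ N.transitions)
    {L : Finset Tr} (hL : N.transitions \ H ⊆ L) {M0 Y0 : P → ℕ} {B : (P → ℕ) → (P → ℕ) → Prop}
    (hB : IsWeakBisimulation ↑L ((N.restrict H).toLTS M0) ((N.comp (counter H p)).toLTS Y0) B)
    {X : P → ℕ} (hXY : B X Y) (hY : N.IsCounterMarking p Y M 0) :
    (N.restrict H).freeLang X = (N.restrict H).freeLang M := by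
  ext v
  constructor
  · rintro ⟨X', hv⟩
    obtain ⟨Y', hv', -⟩ :=
      hB.1.exists_weakSteps ((weakSteps_toLTS_iff_firesSeq hL).2 hv) hXY
    exact exists_restrict_firesSeq_of_weakSteps hp hH hL hv' hY
  · rintro ⟨M', hv⟩
    have hvH : v.countP (· ∈ H) = 0 := by
      simpa [List.countP_eq_zero] using fun t ht =>
        (Finset.mem_sdiff.1 (hv.mem_transitions t ht)).2
    obtain ⟨Y', hv', -⟩ :=
      exists_comp_counter_firesSeq hp hH 0 hv.of_restrict (by rwa [hvH])
    have hvL : v.filter (· ∈ L) = v :=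
      List.filter_eq_self.2 fun t ht => by simpa using hL (hv.mem_transitions t ht)
    obtain ⟨X', hX', -⟩ :=
      hB.2.exists_weakSteps (hvL ▸ weakSteps_toLTS_of_firesSeq (M0 := Y0) hv') hXY
    exact ⟨X', (weakSteps_toLTS_iff_firesSeq hL).1 hX'⟩

end Counter

end PTNet

open PTNet in
theorem lang_eq_of_rrel_of_bndc_general
    {P Tr : Type _} [DecidableEq P] [DecidableEq Tr] [Infinite P]
    (N : PTNet P Tr) (M0 : P → ℕ) (L H : Finset Tr)
    (hT : N.transitions = L ∪ H) (hLH : Disjoint L H)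
    (hBNDC : BNDC N M0 L H)
    (M1 M2 : P → ℕ)
    (hR : RRel N M0 L H M1 M2) :
    (N.restrict H).freeLang M1 = (N.restrict H).freeLang M2 := by
  have hH : H ⊆ N.transitions := hT ▸ Finset.subset_union_right
  have hL : N.transitions \ H ⊆ L := by
    rw [hT, Finset.union_sdiff_right]
    exact Finset.sdiff_subset
  obtain ⟨w, hw, hs⟩ := hR.exists_firesSeq hLH
  obtain ⟨p, hp⟩ := Infinite.exists_notMem_finset N.places
  set k := w.countP (· ∈ H)
  obtain ⟨B, hB⟩ := hBNDC (counter H p) (fun _ => k)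
    (Finset.disjoint_singleton_right.2 hp) hLH.symm
  rw [show H \ (counter H p).transitions = ∅ from Finset.sdiff_self H, restrict_empty] at hB
  obtain ⟨Y, hwY, hY⟩ := exists_comp_counter_firesSeq hp hH 0 hw
    (⟨fun q hq => if_pos hq, if_neg hp⟩ : N.IsCounterMarking p (N.combine M0 fun _ => k) M0 k)
  obtain ⟨X, hX, hXY⟩ := hB.2.exists_weakSteps (weakSteps_toLTS_of_firesSeq hwY) hB.1.1
  obtain rfl : X = M1 := ((weakSteps_toLTS_iff_firesSeq hL).1 hX).unique hs
  exact restrict_freeLang_eq_of_isWeakBisimulation hp hH hL hB hXY hY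

/-- if `N` has BNDC and `M1 R M2` for reachable markings `M1` of
`N \ H` and `M2` of `N`, then `L(N\H, M1) = L(N\H, M2)`. -/
theorem lang_eq_of_rrel_of_bndc
    {P Tr : Type _} [DecidableEq P] [DecidableEq Tr] [Infinite P]
    (N : PTNet P Tr) (M0 : P → ℕ) (L H : Finset Tr)
    (hT : N.transitions = L ∪ H) (hLH : Disjoint L H)
    (hBNDC : BNDC N M0 L H)
    (M1 M2 : P → ℕ)
    (h1 : (N.restrict H).Reachable M0 M1) (h2 : N.Reachable M0 M2)
    (hR : RRel N M0 L H M1 M2) :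
    (N.restrict H).freeLang M1 = (N.restrict H).freeLang M2 :=
  lang_eq_of_rrel_of_bndc_general N M0 L H hT hLH hBNDC M1 M2 hR
end

section
/- A two-level PT-net system N with T = L ∪ H has the property BNDC if and only if it has the property SBNDC. -/
/-! SBNDC implies BNDC: relate a marking `M₁` of `N \ H` to a marking `Mc` of the composition
`(N | N') \ (H \ H')` when the `N`-part of `Mc` is reachable and weakly bisimilar to `M₁` in
`N \ H`. Low steps on either side are matched through that bisimilarity, a high step of the
composition preserves the relation by SBNDC, and a step of `N'` alone leaves the `N`-part unchanged.

BNDC implies SBNDC: compose `N` with a net whose single fresh place holds a budget of tokens, one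
consumed by each high transition. Started with as many tokens as a firing sequence has high
transitions, the composition replays the sequence and ends with no budget left, where it behaves
exactly as `N \ H`. So BNDC makes every reachable marking bisimilar, in `N \ H`, to the marking
that `N \ H` reaches by the low projection of the sequence; and `M₁` and `M₁ [h⟩ M₂` have the same
low projection. -/

namespace LTS

variable {Q A : Type _} {S : LTS Q A} {Obs : Set A}

theorem WeakSteps.of_tauStar_left {q q' q'' : Q} {w : List A} (h : S.TauStar Obs q q')
    (hw : S.WeakSteps Obs q' w q'') : S.WeakSteps Obs q w q'' := by
  induction h using Relation.ReflTransGen.head_induction_on with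
  | refl => exact hw
  | head step _ ih =>
      obtain ⟨τ, hτ, htr⟩ := step
      exact .tau hτ htr ih

theorem WeakSteps.eq_of_deterministic
    (hτ : ∀ q τ q', τ ∉ Obs → ¬ S.tr q τ q')
    (hdet : ∀ q a q₁ q₂, S.tr q a q₁ → S.tr q a q₂ → q₁ = q₂)
    {q q₁ q₂ : Q} {w : List A} (h₁ : S.WeakSteps Obs q w q₁) (h₂ : S.WeakSteps Obs q w q₂) :
    q₁ = q₂ := by
  induction h₁ with
  | nil => cases h₂ with
    | nil => rfl
    | tau hτ' htr _ => exact absurd htr (hτ _ _ _ hτ')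
  | tau hτ' htr _ _ => exact absurd htr (hτ _ _ _ hτ')
  | obs _ htr _ ih => cases h₂ with
    | tau hτ' htr' _ => exact absurd htr' (hτ _ _ _ hτ')
    | obs _ htr' h₂' => exact ih (hdet _ _ _ _ htr' htr ▸ h₂')

end LTS

namespace IsWeakSimulation

variable {Q Q' Q'' A : Type _} {Obs : Set A} {S : LTS Q A} {S' : LTS Q' A} {S'' : LTS Q'' A}
  {R : Q → Q' → Prop}

theorem of_step (hinit : R S.init S'.init)
    (hobs : ∀ q q', R q q' → ∀ σ ∈ Obs, ∀ q₂, S.tr q σ q₂ → ∃ q₂', S'.tr q' σ q₂' ∧ R q₂ q₂')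
    (htau : ∀ q q', R q q' → ∀ τ ∉ Obs, ∀ q₂, S.tr q τ q₂ → R q₂ q') :
    IsWeakSimulation Obs S S' R := by
  refine ⟨hinit, fun q q' hR => ⟨fun σ hσ q₂ h => ?_, fun τ hτ q₂ h => ?_⟩⟩
  · obtain ⟨q₂', h', hR'⟩ := hobs q q' hR σ hσ q₂ h
    exact ⟨q', q₂', q₂', .refl, h', .refl, hR'⟩
  · exact ⟨q', .refl, htau q q' hR τ hτ q₂ h⟩

theorem tauStar (h : IsWeakSimulation Obs S S' R) {a a' : Q} {b : Q'} (hab : R a b)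
    (hs : S.TauStar Obs a a') : ∃ b', S'.TauStar Obs b b' ∧ R a' b' := by
  induction hs with
  | refl => exact ⟨b, .refl, hab⟩
  | tail _ step ih =>
      obtain ⟨b', hb', hR⟩ := ih
      obtain ⟨τ, hτ, htr⟩ := step
      obtain ⟨b'', hb'', hR'⟩ := (h.2 _ _ hR).2 τ hτ _ htr
      exact ⟨b'', hb'.trans hb'', hR'⟩

theorem weakSteps (h : IsWeakSimulation Obs S S' R) {a a' : Q} {b : Q'} {w : List A}
    (hab : R a b) (hs : S.WeakSteps Obs a w a') : ∃ b', S'.WeakSteps Obs b w b' ∧ R a' b' := by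
  induction hs generalizing b with
  | nil => exact ⟨b, .nil b, hab⟩
  | tau hτ htr _ ih =>
      obtain ⟨b₁, hb₁, hR₁⟩ := (h.2 _ _ hab).2 _ hτ _ htr
      obtain ⟨b', hb', hR'⟩ := ih hR₁
      exact ⟨b', .of_tauStar_left hb₁ hb', hR'⟩
  | obs hσ htr _ ih =>
      obtain ⟨b₁, b₂, b₃, hb₁, hb₂, hb₃, hR₃⟩ := (h.2 _ _ hab).1 _ hσ _ htr
      obtain ⟨b', hb', hR'⟩ := ih hR₃
      exact ⟨b', .of_tauStar_left hb₁ (.obs hσ hb₂ (.of_tauStar_left hb₃ hb')), hR'⟩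

theorem comp {R' : Q' → Q'' → Prop} (h : IsWeakSimulation Obs S S' R)
    (h' : IsWeakSimulation Obs S' S'' R') : IsWeakSimulation Obs S S'' (Relation.Comp R R') := by
  refine ⟨⟨S'.init, h.1, h'.1⟩, ?_⟩
  rintro a c ⟨b, hab, hbc⟩
  refine ⟨fun σ hσ a₂ ha₂ => ?_, fun τ hτ a₂ ha₂ => ?_⟩
  · obtain ⟨b₁, b₂, b₃, hb₁, hb₂, hb₃, hR⟩ := (h.2 a b hab).1 σ hσ a₂ ha₂
    obtain ⟨c₁, hc₁, hR₁⟩ := h'.tauStar hbc hb₁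
    obtain ⟨c₂, c₃, c₄, hc₂, hc₃, hc₄, hR₃⟩ := (h'.2 b₁ c₁ hR₁).1 σ hσ b₂ hb₂
    obtain ⟨c₅, hc₅, hR₅⟩ := h'.tauStar hR₃ hb₃
    exact ⟨c₂, c₃, c₅, hc₁.trans hc₂, hc₃, hc₄.trans hc₅, b₃, hR, hR₅⟩
  · obtain ⟨b₂, hb₂, hR⟩ := (h.2 a b hab).2 τ hτ a₂ ha₂
    obtain ⟨c₂, hc₂, hR₂⟩ := h'.tauStar hbc hb₂
    exact ⟨c₂, hc₂, b₂, hR, hR₂⟩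

theorem refl (S : LTS Q A) : IsWeakSimulation Obs S S Eq := by
  refine ⟨rfl, ?_⟩
  rintro q _ rfl
  exact ⟨fun σ _ q₂ h => ⟨q, q₂, q₂, .refl, h, .refl, rfl⟩,
    fun τ hτ q₂ h => ⟨q₂, .single ⟨τ, hτ, h⟩, rfl⟩⟩

end IsWeakSimulation

namespace WeaklyBisimilar

variable {Q Q' Q'' A : Type _} {Obs : Set A} {S : LTS Q A} {S' : LTS Q' A} {S'' : LTS Q'' A}

theorem refl (S : LTS Q A) : WeaklyBisimilar Obs S S :=
  ⟨Eq, .refl S, by simpa only [eq_comm] using IsWeakSimulation.refl (Obs := Obs) S⟩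

theorem symm (h : WeaklyBisimilar Obs S S') : WeaklyBisimilar Obs S' S :=
  let ⟨R, h₁, h₂⟩ := h
  ⟨flip R, h₂, h₁⟩

theorem trans (h : WeaklyBisimilar Obs S S') (h' : WeaklyBisimilar Obs S' S'') :
    WeaklyBisimilar Obs S S'' := by
  obtain ⟨R, hR, hRinv⟩ := h
  obtain ⟨R', hR', hR'inv⟩ := h'
  refine ⟨Relation.Comp R R', hR.comp hR', ?_⟩
  have h : IsWeakSimulation Obs S'' S (Relation.Comp (flip R') (flip R)) :=
    hR'inv.comp hRinv
  rwa [← Relation.flip_comp] at h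

end WeaklyBisimilar

namespace PTNet

variable {P Tr : Type _} {N N' : PTNet P Tr}
  {M M' M'' Mc Mc' F : P → ℕ} {t : Tr} {s : List Tr}

theorem mem_restrict_transitions_iff [DecidableEq Tr] {L H : Finset Tr}
    (hT : N.transitions = L ∪ H) (hLH : Disjoint L H) :
    t ∈ (N.restrict H).transitions ↔ t ∈ L := by
  have : t ∈ L → t ∉ H := fun h => Finset.disjoint_left.mp hLH h
  simp only [restrict, Finset.mem_sdiff, hT, Finset.mem_union]
  tauto

variable [DecidableEq P]

theorem FiresSeq.append_fires (hs : N.FiresSeq M s M') (ht : N.Fires M' t M'') :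
    N.FiresSeq M (s ++ [t]) M'' := by
  induction s generalizing M with
  | nil => exact ⟨M'', hs ▸ ht, rfl⟩
  | cons u s ih =>
      obtain ⟨M₁, hu, hs⟩ := hs
      exact ⟨M₁, hu, ih hs⟩

theorem Reachable.fires (h : N.Reachable M M') (ht : N.Fires M' t M'') : N.Reachable M M'' :=
  let ⟨s, hs⟩ := h
  ⟨s ++ [t], hs.append_fires ht⟩

theorem fire_of_not_mem (ht : t ∉ N.transitions) : N.fire M t = M := by
  funext p
  simp [fire, N.pre_eq_zero t ht, N.post_eq_zero t ht]

theorem combine_combine_self : N.combine (N.combine M M') M = M := by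
  funext p
  by_cases hp : p ∈ N.places <;> simp [combine, hp]

theorem enabled_combine_iff :
    N.Enabled (N.combine Mc F) t ↔ t ∈ N.transitions ∧ ∀ p ∈ N.places, N.pre t p ≤ Mc p := by
  simp +contextual [Enabled, combine]

theorem _root_.IsWeakBisimulation.weaklyBisimilar_toLTS {N₁ N₂ : PTNet P Tr} {Obs : Set Tr}
    {X Y M₁ M₂ : P → ℕ} {R : (P → ℕ) → (P → ℕ) → Prop}
    (h : IsWeakBisimulation Obs (N₁.toLTS X) (N₂.toLTS Y) R) (hR : R M₁ M₂) :
    WeaklyBisimilar Obs (N₁.toLTS M₁) (N₂.toLTS M₂) :=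
  ⟨R, ⟨hR, h.1.2⟩, ⟨hR, h.2.2⟩⟩

variable [DecidableEq Tr]

theorem FiresSeq.weakSteps (L : Finset Tr) (X : P → ℕ) (h : N.FiresSeq M s M') :
    (N.toLTS X).WeakSteps L M (s.filter (· ∈ L)) M' := by
  induction s generalizing M with
  | nil =>
      obtain rfl : M' = M := h
      exact .nil _
  | cons u s ih =>
      obtain ⟨M₁, hu, hs⟩ := h
      by_cases huL : u ∈ L
      · simpa [List.filter_cons, huL] using LTS.WeakSteps.obs huL hu (ih hs)
      · simpa [List.filter_cons, huL] using LTS.WeakSteps.tau huL hu (ih hs)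

theorem restrict_fire_of_mem {T' : Finset Tr} (ht : t ∈ (N.restrict T').transitions) :
    (N.restrict T').fire M t = N.fire M t := by
  funext p
  simp [fire, restrict, Finset.mem_sdiff.mp ht]

theorem fires_restrict_iff {T' : Finset Tr} :
    (N.restrict T').Fires M t M' ↔ t ∉ T' ∧ N.Fires M t M' := by
  by_cases ht : t ∈ (N.restrict T').transitions
  · have ht' := Finset.mem_sdiff.mp ht
    rw [Fires, Fires, restrict_fire_of_mem ht]
    simp [Enabled, restrict, ht']
  · have ht' : ¬(t ∈ N.transitions ∧ t ∉ T') := fun h => ht (Finset.mem_sdiff.mpr h)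
    simp only [Fires, Enabled, ht, false_and, false_iff]
    tauto

theorem enabled_comp_iff :
    (N.comp N').Enabled Mc t ↔ t ∈ N.transitions ∪ N'.transitions ∧
      (∀ p ∈ N.places, N.pre t p ≤ Mc p) ∧ ∀ p ∈ N'.places, p ∉ N.places → N'.pre t p ≤ Mc p := by
  simp only [Enabled, comp, Finset.mem_union]
  refine and_congr_right fun _ => ⟨fun h => ⟨fun p hp => ?_, fun p hp hpN => ?_⟩, ?_⟩
  · simpa [hp] using h p (Or.inl hp)
  · simpa [hpN] using h p (Or.inr hp)
  · rintro ⟨hN, hN'⟩ p hp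
    by_cases hpN : p ∈ N.places
    · simpa [hpN] using hN p hpN
    · simpa [hpN] using hN' p (hp.resolve_left hpN) hpN

theorem combine_fire_comp : N.combine ((N.comp N').fire Mc t) F = N.fire (N.combine Mc F) t := by
  funext p
  by_cases hp : p ∈ N.places <;> simp [combine, fire, comp, hp]

theorem enabled_comp_of_not_mem (h : N.Enabled (N.combine Mc F) t) (ht : t ∉ N'.transitions) :
    (N.comp N').Enabled Mc t := by
  obtain ⟨htN, hpre⟩ := enabled_combine_iff.mp h
  refine enabled_comp_iff.mpr ⟨Finset.mem_union_left _ htN, hpre, fun p _ _ => ?_⟩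
  simp [N'.pre_eq_zero t ht]

theorem Fires.combine_of_comp (h : (N.comp N').Fires Mc t Mc') (ht : t ∈ N.transitions) :
    N.Fires (N.combine Mc F) t (N.combine Mc' F) :=
  ⟨enabled_combine_iff.mpr ⟨ht, (enabled_comp_iff.mp h.1).2.1⟩, h.2 ▸ combine_fire_comp⟩

theorem Fires.combine_eq_of_comp (h : (N.comp N').Fires Mc t Mc') (ht : t ∉ N.transitions) :
    N.combine Mc' F = N.combine Mc F :=
  h.2 ▸ combine_fire_comp.trans (fire_of_not_mem ht)

theorem comp_fire_of_not_mem {p : P} (hp : p ∉ N.places) (hp' : p ∈ N'.places) :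
    (N.comp N').fire Mc t p = N'.fire Mc t p := by
  simp [fire, comp, hp, hp']

section TwoLevel

variable {L H : Finset Tr} {M₁ M₂ M₁' : P → ℕ}

theorem mem_of_fires_restrict (hT : N.transitions = L ∪ H) (hLH : Disjoint L H)
    (h : (N.restrict H).Fires M t M') : t ∈ L :=
  (mem_restrict_transitions_iff hT hLH).mp h.1.1

theorem fires_restrict_iff_of_mem (hLH : Disjoint L H) (ht : t ∈ L) :
    (N.restrict H).Fires M t M' ↔ N.Fires M t M' := by
  rw [fires_restrict_iff, and_iff_right (Finset.disjoint_left.mp hLH ht)]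

theorem eq_of_tauStar_restrict (hT : N.transitions = L ∪ H) (hLH : Disjoint L H) {X : P → ℕ}
    (h : ((N.restrict H).toLTS X).TauStar L M M') : M = M' := by
  induction h with
  | refl => rfl
  | tail _ step =>
      obtain ⟨τ, hτ, h⟩ := step
      exact absurd (mem_of_fires_restrict hT hLH h) hτ

theorem eq_of_weakSteps_restrict (hT : N.transitions = L ∪ H) (hLH : Disjoint L H)
    {X : P → ℕ} {w : List Tr} (h₁ : ((N.restrict H).toLTS X).WeakSteps L M w M₁)
    (h₂ : ((N.restrict H).toLTS X).WeakSteps L M w M₂) : M₁ = M₂ :=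
  LTS.WeakSteps.eq_of_deterministic (fun _ _ _ hτ h => hτ (mem_of_fires_restrict hT hLH h))
    (fun _ _ _ _ (h₁ : (N.restrict H).Fires _ _ _) (h₂ : (N.restrict H).Fires _ _ _) =>
      h₁.2.trans h₂.2.symm) h₁ h₂

theorem exists_fires_restrict_of_weaklyBisimilar (hT : N.transitions = L ∪ H)
    (hLH : Disjoint L H)
    (hb : WeaklyBisimilar L ((N.restrict H).toLTS M₁) ((N.restrict H).toLTS M₂))
    (hf : (N.restrict H).Fires M₁ t M₁') :
    ∃ M₂', (N.restrict H).Fires M₂ t M₂' ∧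
      WeaklyBisimilar L ((N.restrict H).toLTS M₁') ((N.restrict H).toLTS M₂') := by
  obtain ⟨R, hR⟩ := hb
  obtain ⟨_, M₂', _, hx, hf₂, hz, hRz⟩ :=
    (hR.1.2 _ _ hR.1.1).1 t (mem_of_fires_restrict hT hLH hf) _ hf
  obtain rfl := eq_of_tauStar_restrict hT hLH hx
  obtain rfl := eq_of_tauStar_restrict hT hLH hz
  exact ⟨M₂', hf₂, hR.weaklyBisimilar_toLTS hRz⟩

end TwoLevel

def budgetNet (q : P) (H : Finset Tr) : PTNet P Tr where
  places := {q}
  transitions := H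
  pre t p := if t ∈ H ∧ p = q then 1 else 0
  post _ _ := 0
  pre_eq_zero t ht p := by simp [ht]
  post_eq_zero _ _ _ := rfl

section Budget

variable {q : P} {L H : Finset Tr}

theorem comp_budgetNet_fire_self (hq : q ∉ N.places) :
    (N.comp (budgetNet q H)).fire M t q = M q - if t ∈ H then 1 else 0 := by
  rw [comp_fire_of_not_mem hq (Finset.mem_singleton_self q)]
  simp [fire, budgetNet]

theorem enabled_comp_budgetNet_iff (hq : q ∉ N.places) (hH : H ⊆ N.transitions) :
    (N.comp (budgetNet q H)).Enabled Mc t ↔ N.Enabled (N.combine Mc F) t ∧ (t ∈ H → 1 ≤ Mc q) := by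
  rw [enabled_comp_iff, enabled_combine_iff]
  simp only [budgetNet, Finset.union_eq_left.mpr hH, Finset.mem_singleton, forall_eq, hq,
    not_false_eq_true, and_true, forall_const]
  by_cases htH : t ∈ H <;> simp [htH, and_assoc]

theorem FiresSeq.exists_firesSeq_comp_budgetNet (hq : q ∉ N.places) (hH : H ⊆ N.transitions)
    (h : N.FiresSeq M s M') (hM : N.combine Mc F = M) (hbudget : Mc q = s.countP (· ∈ H)) :
    ∃ Mc', ((N.comp (budgetNet q H)).restrict (H \ H)).FiresSeq Mc s Mc' ∧
      N.combine Mc' F = M' ∧ Mc' q = 0 := by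
  induction s generalizing M Mc with
  | nil =>
      obtain rfl : M' = M := h
      exact ⟨Mc, rfl, hM, by simpa using hbudget⟩
  | cons t s ih =>
      obtain ⟨M₁, ht, hs⟩ := h
      have hen : (N.comp (budgetNet q H)).Enabled Mc t :=
        (enabled_comp_budgetNet_iff hq hH).mpr
          ⟨hM ▸ ht.1, fun htH => by simp [hbudget, htH]⟩
      obtain ⟨Mc', hs', hM', hq'⟩ := ih hs (combine_fire_comp.trans (hM ▸ ht.2.symm))
        (by rw [comp_budgetNet_fire_self (H := H) hq, hbudget, List.countP_cons]; simp)
      exact ⟨Mc', ⟨_, fires_restrict_iff.mpr ⟨by simp, hen, rfl⟩, hs'⟩, hM', hq'⟩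

theorem weaklyBisimilar_restrict_comp_budgetNet (hT : N.transitions = L ∪ H)
    (hLH : Disjoint L H) (hq : q ∉ N.places) (hMc : Mc q = 0) :
    WeaklyBisimilar L ((N.restrict H).toLTS (N.combine Mc F))
      (((N.comp (budgetNet q H)).restrict (H \ H)).toLTS Mc) := by
  have hH : H ⊆ N.transitions := hT ▸ Finset.subset_union_right
  have hstep : ∀ {t : Tr} {X X' : P → ℕ}, X q = 0 →
      ((N.comp (budgetNet q H)).restrict (H \ H)).Fires X t X' →
      t ∈ L ∧ N.Fires (N.combine X F) t (N.combine X' F) ∧ X' q = 0 := by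
    intro t X X' hX hf
    obtain ⟨-, hen, rfl⟩ := fires_restrict_iff.mp hf
    obtain ⟨hN, hbudget⟩ := (enabled_comp_budgetNet_iff hq hH).mp hen
    have htH : t ∉ H := fun h => by simpa [hX] using hbudget h
    exact ⟨(Finset.mem_union.mp (hT ▸ hN.1)).resolve_right htH, ⟨hN, combine_fire_comp⟩,
      by simp [comp_budgetNet_fire_self hq, hX, htH]⟩
  let E : (P → ℕ) → (P → ℕ) → Prop := fun M Mc => M = N.combine Mc F ∧ Mc q = 0
  refine ⟨E, .of_step ⟨rfl, hMc⟩ ?_ ?_, .of_step ⟨rfl, hMc⟩ ?_ ?_⟩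
  · rintro _ Mc ⟨rfl, hMc⟩ l - M' hf
    have hl := mem_of_fires_restrict hT hLH hf
    have hlH : l ∉ H := Finset.disjoint_left.mp hLH hl
    have hN := (fires_restrict_iff_of_mem hLH hl).mp hf
    have hen := (enabled_comp_budgetNet_iff hq hH).mpr ⟨hN.1, fun h => absurd h hlH⟩
    exact ⟨_, fires_restrict_iff.mpr ⟨by simp, hen, rfl⟩, hN.2.trans combine_fire_comp.symm,
      by simp [comp_budgetNet_fire_self hq, hMc, hlH]⟩
  · rintro M₁ Mc - τ hτ M₁' hf
    exact absurd (mem_of_fires_restrict hT hLH hf) hτ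
  · rintro Mc _ ⟨rfl, hMc⟩ l - Mc' hf
    obtain ⟨hl, hN, hMc'⟩ := hstep hMc hf
    exact ⟨_, (fires_restrict_iff_of_mem hLH hl).mpr hN, rfl, hMc'⟩
  · rintro Mc _ ⟨rfl, hMc⟩ τ hτ Mc' hf
    exact absurd (hstep hMc hf).1 hτ

end Budget

end PTNet

open PTNet

theorem bndc_of_sbndc {P Tr : Type _} [DecidableEq P] [DecidableEq Tr] {N : PTNet P Tr}
    {M0 : P → ℕ} {L H : Finset Tr} (hT : N.transitions = L ∪ H) (hLH : Disjoint L H)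
    (hS : SBNDC N M0 L H) : BNDC N M0 L H := by
  intro N' M0' _ hdT
  -- the `N`-part of a marking of the composition, completed by `M0` off the places of `N`
  -- (as is every marking reachable from `M0`)
  let π : (P → ℕ) → P → ℕ := fun Mc => N.combine Mc M0
  let R : (P → ℕ) → (P → ℕ) → Prop := fun M₁ Mc => N.Reachable M0 (π Mc) ∧
    WeaklyBisimilar L ((N.restrict H).toLTS M₁) ((N.restrict H).toLTS (π Mc))
  have hinit : R M0 (N.combine M0 M0') := by
    simp only [R, π, combine_combine_self]
    exact ⟨⟨[], rfl⟩, .refl _⟩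
  refine ⟨R, .of_step hinit ?_ ?_, .of_step hinit ?_ ?_⟩
  · rintro M₁ Mc ⟨hreach, hb⟩ l - M₁' hf
    have hl := mem_of_fires_restrict hT hLH hf
    obtain ⟨M₂', hf₂, hb'⟩ := exists_fires_restrict_of_weaklyBisimilar hT hLH hb hf
    have hN := (fires_restrict_iff_of_mem hLH hl).mp hf₂
    have hen : (N.comp N').Enabled Mc l :=
      enabled_comp_of_not_mem hN.1 (Finset.disjoint_right.mp hdT hl)
    have hπ : π ((N.comp N').fire Mc l) = M₂' := combine_fire_comp.trans hN.2.symm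
    refine ⟨(N.comp N').fire Mc l, fires_restrict_iff.mpr ⟨?_, hen, rfl⟩, ?_, ?_⟩
    · exact fun h => Finset.disjoint_left.mp hLH hl (Finset.mem_sdiff.mp h).1
    · exact hπ ▸ hreach.fires hN
    · exact hπ ▸ hb'
  · rintro M₁ Mc - τ hτ M₁' hf
    exact absurd (mem_of_fires_restrict hT hLH hf) hτ
  · rintro Mc M₁ ⟨hreach, hb⟩ l hl Mc' hf
    have hN : N.Fires (π Mc) l (π Mc') :=
      (fires_restrict_iff.mp hf).2.combine_of_comp (hT ▸ Finset.mem_union_left _ hl)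
    obtain ⟨M₁', hf₁, hb'⟩ := exists_fires_restrict_of_weaklyBisimilar hT hLH hb.symm
      ((fires_restrict_iff_of_mem hLH hl).mpr hN)
    exact ⟨M₁', hf₁, hreach.fires hN, hb'.symm⟩
  · rintro Mc M₁ ⟨hreach, hb⟩ τ hτ Mc' hf
    have hf := (fires_restrict_iff.mp hf).2
    by_cases hτN : τ ∈ N.transitions
    · have hN : N.Fires (π Mc) τ (π Mc') := hf.combine_of_comp hτN
      have hτH : τ ∈ H := (Finset.mem_union.mp (hT ▸ hτN)).resolve_left hτ
      exact ⟨hreach.fires hN, hb.trans (hS _ _ _ hreach hτH hN)⟩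
    · have hπ : π Mc' = π Mc := hf.combine_eq_of_comp hτN
      exact ⟨hπ ▸ hreach, hπ ▸ hb⟩

theorem BNDC.exists_weakSteps_weaklyBisimilar {P Tr : Type _} [DecidableEq P] [DecidableEq Tr]
    [Infinite P] {N : PTNet P Tr} {M0 M : P → ℕ} {L H : Finset Tr} {s : List Tr}
    (hT : N.transitions = L ∪ H) (hLH : Disjoint L H) (hB : BNDC N M0 L H)
    (hs : N.FiresSeq M0 s M) :
    ∃ M', ((N.restrict H).toLTS M0).WeakSteps L M0 (s.filter (· ∈ L)) M' ∧
      WeaklyBisimilar L ((N.restrict H).toLTS M') ((N.restrict H).toLTS M) := by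
  obtain ⟨q, hq⟩ := Infinite.exists_notMem_finset N.places
  obtain ⟨R, hR⟩ := hB (budgetNet q H) (fun _ => s.countP (· ∈ H))
    (Finset.disjoint_singleton_right.mpr hq) hLH.symm
  obtain ⟨Mc, hsC, hMc, hq0⟩ := hs.exists_firesSeq_comp_budgetNet hq
    (hT ▸ Finset.subset_union_right) (Mc := N.combine M0 fun _ => s.countP (· ∈ H))
    combine_combine_self (by simp [combine, hq])
  obtain ⟨M', hM', hR'⟩ := hR.2.weakSteps hR.2.1 (hsC.weakSteps L _)
  exact ⟨M', hM', (hR.weaklyBisimilar_toLTS hR').trans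
    (hMc ▸ weaklyBisimilar_restrict_comp_budgetNet hT hLH hq hq0).symm⟩

theorem sbndc_of_bndc {P Tr : Type _} [DecidableEq P] [DecidableEq Tr] [Infinite P]
    {N : PTNet P Tr} {M0 : P → ℕ} {L H : Finset Tr} (hT : N.transitions = L ∪ H)
    (hLH : Disjoint L H) (hB : BNDC N M0 L H) : SBNDC N M0 L H := by
  rintro M₁ h M₂ ⟨w, hw⟩ hh hf
  obtain ⟨M, hM, hb₁⟩ := hB.exists_weakSteps_weaklyBisimilar hT hLH hw
  obtain ⟨M', hM', hb₂⟩ := hB.exists_weakSteps_weaklyBisimilar hT hLH (hw.append_fires hf)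
  rw [List.filter_append, List.filter_singleton,
    decide_eq_false (Finset.disjoint_right.mp hLH hh), cond_false, List.append_nil] at hM'
  obtain rfl := eq_of_weakSteps_restrict hT hLH hM hM'
  exact hb₁.symm.trans hb₂

/-- a two-level net system has BNDC iff it has SBNDC. -/
theorem bndc_iff_sbndc
    {P Tr : Type _} [DecidableEq P] [DecidableEq Tr] [Infinite P]
    (N : PTNet P Tr) (M0 : P → ℕ) (L H : Finset Tr)
    (hT : N.transitions = L ∪ H) (hLH : Disjoint L H) :
    BNDC N M0 L H ↔ SBNDC N M0 L H :=
  ⟨sbndc_of_bndc hT hLH, bndc_of_sbndc hT hLH⟩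
end
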